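/- arXiv:2401.02345 — 2 statements merged into one kernel-verified Lean document; each statement's English description precedes it below -/
import Mathlib

section
/- For a factorial standard subspace H, the cutting projection satisfies P_H* = −i P_H i, i.e., the adjoint of P_H (as a real-linear operator with respect to the real part of the inner product) equals the cutting projection P_{iH} onto iH. -/
variable {H : Type*} [NormedAddCommGroup H] [InnerProductSpace ℂ H]

/-- The symplectic complement of a real-linear subspace of a complex Hilbert space. -/
def symplCompl (K : Submodule ℝ H) : Submodule ℝ H where
  carrier := {ψ : H | ∀ φ ∈ K, (inner ℂ ψ φ : ℂ).im = 0}
  add_mem' := by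
    intro a b ha hb φ hφ
    rw [inner_add_left, Complex.add_im, ha φ hφ, hb φ hφ, add_zero]
  zero_mem' := by
    intro φ hφ
    simp
  smul_mem' := by
    intro c x hx φ hφ
    have : c • x = (c : ℂ) • x := (Complex.coe_smul c x).symm
    rw [this, inner_smul_left]
    simp [hx φ hφ]


/-- Multiplication by `i` as a real-linear map. -/
noncomputable def mulI : H →ₗ[ℝ] H where
  toFun x := Complex.I • x
  map_add' x y := smul_add _ x y
  map_smul' c x := smul_comm Complex.I c x

/-- A standard subspace: closed, cyclic and separating. -/
def IsStandard (K : Submodule ℝ H) : Prop :=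
  IsClosed (K : Set H) ∧ (K ⊔ K.map mulI).topologicalClosure = ⊤ ∧ K ⊓ K.map mulI = ⊥

/-
The adjoint identity is pure bookkeeping with the symplectic form `Im⟨·,·⟩`. Put `p = P x` and
`q = P (i y)`, both in `K`. Since `x - p` and `i y - q` are symplectically orthogonal to `K`,
`Im⟨x, q⟩ = Im⟨p, q⟩` and `Im⟨i y, p⟩ = Im⟨q, p⟩ = -Im⟨p, q⟩`. Now `Re⟨x, -i q⟩ = Im⟨x, q⟩` and
`Im⟨i y, p⟩ = -Re⟨p, y⟩`, so both sides equal `Im⟨p, q⟩`.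
-/

open Complex

theorem im_inner_eq_of_sub_mem_symplCompl {K : Submodule ℝ H} {x p q : H}
    (hxp : x - p ∈ symplCompl K) (hq : q ∈ K) :
    (inner ℂ x q : ℂ).im = (inner ℂ p q : ℂ).im := by
  have h := hxp q hq
  rw [inner_sub_left, sub_im] at h
  linarith

theorem re_inner_neg_I_smul_right (x q : H) :
    (inner ℂ x (-(I • q)) : ℂ).re = (inner ℂ x q : ℂ).im := by
  simp [inner_neg_right, inner_smul_right]

theorem im_inner_I_smul_left (y p : H) :
    (inner ℂ (I • y) p : ℂ).im = -(inner ℂ p y : ℂ).re := by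
  rw [inner_smul_left, ← inner_conj_symm y p]
  simp only [conj_I, neg_mul, neg_im, mul_im, I_re, I_im, conj_re, zero_mul, one_mul, zero_add]

theorem re_inner_eq_of_cutting_pair {K : Submodule ℝ H} {x y p q : H} (hp : p ∈ K) (hq : q ∈ K)
    (hxp : x - p ∈ symplCompl K) (hyq : I • y - q ∈ symplCompl K) :
    (inner ℂ p y : ℂ).re = (inner ℂ x (-(I • q)) : ℂ).re := by
  have hx : (inner ℂ x q : ℂ).im = (inner ℂ p q : ℂ).im :=
    im_inner_eq_of_sub_mem_symplCompl hxp hq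
  have hy : (inner ℂ (I • y) p : ℂ).im = (inner ℂ q p : ℂ).im :=
    im_inner_eq_of_sub_mem_symplCompl hyq hp
  have hqp : (inner ℂ q p : ℂ).im = -(inner ℂ p q : ℂ).im := inner_im_symm (𝕜 := ℂ) q p
  rw [im_inner_I_smul_left, hqp] at hy
  rw [re_inner_neg_I_smul_right, hx]
  linarith

theorem cutting_projection_adjoint_general (K : Submodule ℝ H)
    (P : (K ⊔ symplCompl K : Submodule ℝ H) →ₗ[ℝ] H)
    (hP : ∀ x : (K ⊔ symplCompl K : Submodule ℝ H),
      P x ∈ K ∧ ((x : H) - P x) ∈ symplCompl K) :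
    ∀ (x y : H) (hx : x ∈ K ⊔ symplCompl K) (hy : Complex.I • y ∈ K ⊔ symplCompl K),
      (inner ℂ (P ⟨x, hx⟩) y : ℂ).re
        = (inner ℂ x (-(Complex.I • P ⟨Complex.I • y, hy⟩)) : ℂ).re := by
  intro x y hx hy
  obtain ⟨hp, hxp⟩ := hP ⟨x, hx⟩
  obtain ⟨hq, hyq⟩ := hP ⟨Complex.I • y, hy⟩
  exact re_inner_eq_of_cutting_pair hp hq hxp hyq

/-- for a factorial standard subspace `K`, the adjoint of the cutting
projection `P_K` with respect to the real inner product `Re⟨·,·⟩` is `−i P_K i`,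
the cutting projection onto `iK`. -/
theorem cutting_projection_adjoint [CompleteSpace H] (K : Submodule ℝ H)
    (hK : IsStandard K) (hfac : K ⊓ symplCompl K = ⊥)
    (P : (K ⊔ symplCompl K : Submodule ℝ H) →ₗ[ℝ] H)
    (hP : ∀ x : (K ⊔ symplCompl K : Submodule ℝ H),
      P x ∈ K ∧ ((x : H) - P x) ∈ symplCompl K) :
    ∀ (x y : H) (hx : x ∈ K ⊔ symplCompl K) (hy : Complex.I • y ∈ K ⊔ symplCompl K),
      (inner ℂ (P ⟨x, hx⟩) y : ℂ).re
        = (inner ℂ x (-(Complex.I • P ⟨Complex.I • y, hy⟩)) : ℂ).re :=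
  cutting_projection_adjoint_general K P hP
end

section
/- For every smooth real function g on [−1,1], ∫_{−1}^{1} (1−x²) g′(x)² dx ≥ 2 ∫_{−1}^{1} g(x)² dx, provided ∫_{−1}^{1} g(x) dx = 0. -/
open intervalIntegral

/-- Cauchy–Schwarz on an interval for a continuous function. -/
lemma cs_interval (f : ℝ → ℝ) (hf : Continuous f) (y x : ℝ) (hyx : y ≤ x) :
    (∫ t in y..x, f t) ^ 2 ≤ (x - y) * ∫ t in y..x, (f t) ^ 2 := by
  set L : ℝ := x - y with hL
  set S : ℝ := ∫ t in y..x, f t with hS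
  have h0 : 0 ≤ ∫ t in y..x, (L * f t - S) ^ 2 :=
    intervalIntegral.integral_nonneg hyx (fun t _ => sq_nonneg _)
  have hexp : ∫ t in y..x, (L * f t - S) ^ 2
      = L ^ 2 * (∫ t in y..x, (f t) ^ 2) - 2 * L * S * S + S ^ 2 * L := by
    have h1 : (fun t => (L * f t - S) ^ 2)
        = fun t => L ^ 2 * (f t) ^ 2 - 2 * L * S * f t + S ^ 2 := by
      funext t; ring
    rw [h1]
    rw [intervalIntegral.integral_add, intervalIntegral.integral_sub,
      intervalIntegral.integral_const_mul, intervalIntegral.integral_const_mul,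
      intervalIntegral.integral_const]
    · simp [hL]; ring
    · exact (hf.pow 2).intervalIntegrable y x |>.const_mul _
    · exact (hf.intervalIntegrable y x).const_mul _
    · exact ((hf.pow 2).intervalIntegrable y x |>.const_mul _).sub
        ((hf.intervalIntegrable y x).const_mul _)
    · exact intervalIntegrable_const
  rw [hexp] at h0
  rcases eq_or_lt_of_le hyx with h | h
  · have : S = 0 := by rw [hS, h, intervalIntegral.integral_same]
    rw [this]; simp [hL, h]
  · have hL0 : 0 < L := by simp [hL]; linarith
    nlinarith [h0, hL0]

/-- for smooth `g` on `[−1,1]` with zero mean,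
`∫_{−1}^{1} (1−x²) g′(x)² dx ≥ 2 ∫_{−1}^{1} g(x)² dx`. -/
theorem legendre_inequality_k_two (g : ℝ → ℝ) (hg : ContDiff ℝ (⊤ : ℕ∞) g)
    (hmean : ∫ x in (-1 : ℝ)..1, g x = 0) :
    2 * ∫ x in (-1 : ℝ)..1, (g x) ^ 2
      ≤ ∫ x in (-1 : ℝ)..1, (1 - x ^ 2) * (deriv g x) ^ 2 := by
  have hgc : Continuous g := hg.continuous
  have hgd : Continuous (deriv g) := hg.continuous_deriv (by simp)
  set h : ℝ → ℝ := fun t => (deriv g t) ^ 2 with hh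
  have hch : Continuous h := hgd.pow 2
  set H : ℝ → ℝ := fun t => ∫ s in (-1 : ℝ)..t, h s with hHdef
  have hHd : ∀ t : ℝ, HasDerivAt H (h t) t := fun t =>
    intervalIntegral.integral_hasDerivAt_right (hch.intervalIntegrable _ _)
      hch.stronglyMeasurable.stronglyMeasurableAtFilter hch.continuousAt
  have hHdiff : Differentiable ℝ H := fun t => (hHd t).differentiableAt
  have hHc : Continuous H := hHdiff.continuous
  -- pointwise bound
  have hpt0 : ∀ x y : ℝ, y ≤ x → (g x - g y) ^ 2 ≤ (x - y) * (H x - H y) := by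
    intro x y hyx
    have hftc : ∫ t in y..x, deriv g t = g x - g y :=
      intervalIntegral.integral_deriv_eq_sub
        (fun t _ => (hg.differentiable (by simp)).differentiableAt)
        (hgd.intervalIntegrable _ _)
    have hHsub : H x - H y = ∫ t in y..x, h t :=
      intervalIntegral.integral_interval_sub_left (hch.intervalIntegrable _ _)
        (hch.intervalIntegrable _ _)
    rw [← hftc, hHsub]
    exact cs_interval (deriv g) hgd y x hyx
  have hpt : ∀ x y : ℝ, (g x - g y) ^ 2 ≤ (x - y) * (H x - H y) := by
    intro x y
    rcases le_total y x with hyx | hxy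
    · exact hpt0 x y hyx
    · have := hpt0 y x hxy
      nlinarith [this]
  set I : ℝ := ∫ x in (-1 : ℝ)..1, (g x) ^ 2 with hI
  set A : ℝ := ∫ t in (-1 : ℝ)..1, t * H t with hA
  set B : ℝ := ∫ t in (-1 : ℝ)..1, H t with hB
  have hid : ∫ x in (-1 : ℝ)..1, x = 0 := by
    rw [integral_id]; norm_num
  -- step 1 : inner expansion
  have step1 : ∀ y : ℝ, ∫ x in (-1 : ℝ)..1, (g x - g y) ^ 2 = I + 2 * (g y) ^ 2 := by
    intro y
    have h1 : (fun x => (g x - g y) ^ 2)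
        = fun x => (g x) ^ 2 - (2 * g y) * g x + (g y) ^ 2 := by funext x; ring
    rw [h1, intervalIntegral.integral_add, intervalIntegral.integral_sub,
      intervalIntegral.integral_const_mul, intervalIntegral.integral_const, hmean]
    · simp only [smul_eq_mul, mul_zero, sub_zero]; ring
    · exact (hgc.pow 2).intervalIntegrable _ _
    · exact ((continuous_const.mul hgc).intervalIntegrable _ _)
    · exact ((hgc.pow 2).intervalIntegrable _ _).sub
        (((continuous_const.mul hgc).intervalIntegrable _ _))
    · exact intervalIntegrable_const
  -- step 2 : inner expansion of the bound
  have step2 : ∀ y : ℝ,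
      ∫ x in (-1 : ℝ)..1, (x - y) * (H x - H y) = A - y * B + 2 * (y * H y) := by
    intro y
    have h1 : (fun x => (x - y) * (H x - H y))
        = fun x => (x * H x - y * H x - H y * x) + y * H y := by funext x; ring
    have i1 : IntervalIntegrable (fun x => x * H x) MeasureTheory.volume (-1 : ℝ) 1 :=
      (continuous_id.mul hHc).intervalIntegrable _ _
    have i2 : IntervalIntegrable (fun x => y * H x) MeasureTheory.volume (-1 : ℝ) 1 :=
      (continuous_const.mul hHc).intervalIntegrable _ _
    have i3 : IntervalIntegrable (fun x => H y * x) MeasureTheory.volume (-1 : ℝ) 1 :=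
      (continuous_const.mul continuous_id).intervalIntegrable _ _
    rw [h1, intervalIntegral.integral_add ((i1.sub i2).sub i3) intervalIntegrable_const,
      intervalIntegral.integral_sub (i1.sub i2) i3, intervalIntegral.integral_sub i1 i2,
      intervalIntegral.integral_const_mul, intervalIntegral.integral_const_mul, hid]
    simp [hA, hB]; ring
  -- monotonicity of the outer integral
  have hmono : ∫ y in (-1 : ℝ)..1, (I + 2 * (g y) ^ 2)
      ≤ ∫ y in (-1 : ℝ)..1, (A - y * B + 2 * (y * H y)) := by
    apply intervalIntegral.integral_mono_on (by norm_num)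
    · exact (continuous_const.add (continuous_const.mul (hgc.pow 2))).intervalIntegrable _ _
    · exact ((continuous_const.sub (continuous_id.mul continuous_const)).add
        (continuous_const.mul (continuous_id.mul hHc))).intervalIntegrable _ _
    · intro y _
      calc I + 2 * (g y) ^ 2 = ∫ x in (-1 : ℝ)..1, (g x - g y) ^ 2 := (step1 y).symm
        _ ≤ ∫ x in (-1 : ℝ)..1, (x - y) * (H x - H y) := by
            apply intervalIntegral.integral_mono_on (by norm_num)
            · exact ((hgc.sub continuous_const).pow 2).intervalIntegrable _ _
            · exact ((continuous_id.sub continuous_const).mul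
                (hHc.sub continuous_const)).intervalIntegrable _ _
            · intro x _; exact hpt x y
        _ = A - y * B + 2 * (y * H y) := step2 y
  -- compute both outer integrals
  have lhs_eq : ∫ y in (-1 : ℝ)..1, (I + 2 * (g y) ^ 2) = 4 * I := by
    rw [intervalIntegral.integral_add intervalIntegrable_const
      (((show Continuous (fun x => g x ^ 2) from hgc.pow 2).intervalIntegrable _ _).const_mul 2),
      intervalIntegral.integral_const_mul, intervalIntegral.integral_const]
    simp [hI]; ring
  have rhs_eq : ∫ y in (-1 : ℝ)..1, (A - y * B + 2 * (y * H y)) = 4 * A := by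
    have i1 : IntervalIntegrable (fun y : ℝ => y * B) MeasureTheory.volume (-1 : ℝ) 1 :=
      (continuous_id.mul continuous_const).intervalIntegrable _ _
    have i2 : IntervalIntegrable (fun y : ℝ => y * H y) MeasureTheory.volume (-1 : ℝ) 1 :=
      (continuous_id.mul hHc).intervalIntegrable _ _
    rw [intervalIntegral.integral_add (intervalIntegrable_const.sub i1) (i2.const_mul 2),
      intervalIntegral.integral_sub intervalIntegrable_const i1,
      intervalIntegral.integral_const_mul, intervalIntegral.integral_const]
    have : (fun y : ℝ => y * B) = fun y : ℝ => B * y := by funext y; ring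
    rw [this, intervalIntegral.integral_const_mul, hid]
    simp [hA]; ring
  -- integration by parts : A = ∫ (1 - t²)/2 * h
  have hparts : A = (1 / 2) * ∫ t in (-1 : ℝ)..1, (1 - t ^ 2) * h t := by
    have hv : ∀ t : ℝ, HasDerivAt (fun t : ℝ => (t ^ 2 - 1) / 2) t t := by
      intro t
      have := ((hasDerivAt_pow 2 t).sub_const 1).div_const 2
      simpa using this
    have := intervalIntegral.integral_mul_deriv_eq_deriv_mul_of_hasDerivAt
      (u := H) (v := fun t : ℝ => (t ^ 2 - 1) / 2) (u' := h) (v' := fun t : ℝ => t)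
      (a := (-1 : ℝ)) (b := 1) hHc.continuousOn
      (continuous_id.pow 2 |>.sub continuous_const |>.div_const 2).continuousOn
      (fun x _ => hHd x) (fun x _ => hv x)
      (hch.intervalIntegrable _ _) (continuous_id.intervalIntegrable _ _)
    have hH1 : H (-1 : ℝ) = 0 := by simp [hHdef]
    rw [hA]
    have hcomm : (fun t : ℝ => t * H t) = fun t => H t * t := by funext t; ring
    rw [hcomm, this, hH1]
    have : (fun t : ℝ => h t * ((t ^ 2 - 1) / 2))
        = fun t => (-(1 / 2)) * ((1 - t ^ 2) * h t) := by funext t; ring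
    rw [this, intervalIntegral.integral_const_mul]
    norm_num
  -- conclude
  have h4 : 4 * I ≤ 4 * A := lhs_eq ▸ rhs_eq ▸ hmono
  rw [hparts] at h4
  linarith
end
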